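/- arXiv:1110.2529 — 3 statements merged into one kernel-verified Lean document; each statement's English description precedes it below -/
import Mathlib

section
/- Let w(1),...,w(n) ∈ W be the iterates of an online algorithm satisfying the regret bound Σ_{t=1}^n [F(w(t); ξ_t) - F(w*; ξ_t)] ≤ R_n for a fixed w* ∈ W, and the stability bound ‖w(t) - w(t+1)‖ ≤ κ(t) with κ non-increasing. Assume F(·;ξ) is G-Lipschitz in ‖·‖ and F(w;ξ) ∈ [0, GR]. Then for any τ ∈ ℕ, Σ_{t=1}^n [f(w(t)) - f(w*)] ≤ R_n + G τ Σ_{t=1}^n κ(t) + 2τ G R + Σ_{t=1}^n [f(w(t)) - F(w(t); ξ_{t+τ}) + F(w*; ξ_{t+τ}) - f(w*)]. -/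
/-!
Split `f(w t) - f(w*)` into the remainder term and the loss gap `F(w t; ξ_{t+τ}) - F(w*; ξ_{t+τ})`
evaluated `τ` steps ahead. By stability the iterate moves by at most `τ κ(t)` within `τ` steps, so
by Lipschitz continuity this gap is within `G τ κ(t)` of the regret increment at time `t + τ`.
Summing, the regret increments shifted by `τ` differ from the unshifted ones only in `2τ` boundary
terms, each at most `G R` in absolute value.
-/

open Finset

lemma norm_sub_add_le_mul_of_antitone {E : Type*} [SeminormedAddCommGroup E] {w : ℕ → E}
    {κ : ℕ → ℝ} (hstab : ∀ t, ‖w t - w (t + 1)‖ ≤ κ t) (hκ : Antitone κ) (t k : ℕ) :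
    ‖w t - w (t + k)‖ ≤ k * κ t := by
  rw [← dist_eq_norm]
  calc dist (w t) (w (t + k)) ≤ ∑ i ∈ Ico t (t + k), dist (w i) (w (i + 1)) :=
        dist_le_Ico_sum_dist w (Nat.le_add_right t k)
    _ ≤ ∑ _i ∈ Ico t (t + k), κ t := sum_le_sum fun i hi =>
        ((dist_eq_norm _ _).trans_le (hstab i)).trans (hκ (mem_Ico.1 hi).1)
    _ = k * κ t := by simp

lemma abs_sum_Ico_le_mul {g : ℕ → ℝ} {B : ℝ} (hg : ∀ t, |g t| ≤ B) (a k : ℕ) :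
    |∑ t ∈ Ico a (a + k), g t| ≤ k * B :=
  calc |∑ t ∈ Ico a (a + k), g t| ≤ ∑ t ∈ Ico a (a + k), |g t| := abs_sum_le_sum_abs _ _
    _ ≤ ∑ _t ∈ Ico a (a + k), B := sum_le_sum fun t _ => hg t
    _ = k * B := by simp

lemma sum_Ico_shift_le_add {g : ℕ → ℝ} {B : ℝ} (hg : ∀ t, |g t| ≤ B) {a b : ℕ} (hab : a ≤ b)
    (c : ℕ) : ∑ t ∈ Ico a b, g (t + c) ≤ ∑ t ∈ Ico a b, g t + 2 * c * B := by
  rw [sum_Ico_add']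
  have hhead := sum_Ico_consecutive g (Nat.le_add_right a c) (Nat.add_le_add_right hab c)
  have htail := sum_Ico_consecutive g hab (Nat.le_add_right b c)
  have hbound_head := (abs_le.1 (abs_sum_Ico_le_mul hg a c)).1
  have hbound_tail := (abs_le.1 (abs_sum_Ico_le_mul hg b c)).2
  linarith

theorem stmt_4_general {E Ξ : Type*} [NormedAddCommGroup E]
    (W : Set E) (F : E → Ξ → ℝ) (f : E → ℝ)
    (G R : ℝ) (hG : 0 ≤ G)
    (w : ℕ → E) (hw : ∀ t, w t ∈ W)
    (ξ : ℕ → Ξ) (wstar : E) (hwstar : wstar ∈ W)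
    (n : ℕ) (Rn : ℝ) (κ : ℕ → ℝ)
    -- regret bound:
    (hregret : ∑ t ∈ Finset.Icc 1 n, (F (w t) (ξ t) - F wstar (ξ t)) ≤ Rn)
    -- stability with non-increasing κ:
    (hstab : ∀ t, ‖w t - w (t + 1)‖ ≤ κ t)
    (hκ : ∀ s t : ℕ, s ≤ t → κ t ≤ κ s)
    -- Lipschitz continuity and boundedness of the loss:
    (hlip : ∀ u v : E, u ∈ W → v ∈ W → ∀ x : Ξ, |F u x - F v x| ≤ G * ‖u - v‖)
    (hbound : ∀ u : E, u ∈ W → ∀ x : Ξ, F u x ∈ Set.Icc 0 (G * R))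
    (τ : ℕ) :
    ∑ t ∈ Finset.Icc 1 n, (f (w t) - f wstar)
      ≤ Rn + G * τ * ∑ t ∈ Finset.Icc 1 n, κ t + 2 * τ * G * R
        + ∑ t ∈ Finset.Icc 1 n,
            (f (w t) - F (w t) (ξ (t + τ)) + F wstar (ξ (t + τ)) - f wstar) := by
  set g : ℕ → ℝ := fun t => F (w t) (ξ t) - F wstar (ξ t)
  have hg : ∀ t, |g t| ≤ G * R := fun t =>
    abs_sub_le_of_nonneg_of_le (hbound _ (hw t) _).1 (hbound _ (hw t) _).2
      (hbound _ hwstar _).1 (hbound _ hwstar _).2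
  have hshift : ∑ t ∈ Icc 1 n, g (t + τ) ≤ Rn + 2 * τ * G * R := by
    have := sum_Ico_shift_le_add hg (Nat.le_add_left 1 n) τ
    rw [Ico_add_one_right_eq_Icc] at this
    linarith
  have hdrift : ∀ t, F (w t) (ξ (t + τ)) - F wstar (ξ (t + τ)) ≤ G * τ * κ t + g (t + τ) := by
    intro t
    have hF := (le_abs_self _).trans (hlip _ _ (hw t) (hw (t + τ)) (ξ (t + τ)))
    have hmove := mul_le_mul_of_nonneg_left (norm_sub_add_le_mul_of_antitone hstab hκ t τ) hG
    simp only [g]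
    linarith
  have hgap : ∑ t ∈ Icc 1 n, (F (w t) (ξ (t + τ)) - F wstar (ξ (t + τ)))
      ≤ G * τ * ∑ t ∈ Icc 1 n, κ t + ∑ t ∈ Icc 1 n, g (t + τ) := by
    rw [mul_sum, ← sum_add_distrib]
    exact sum_le_sum fun t _ => hdrift t
  calc ∑ t ∈ Icc 1 n, (f (w t) - f wstar)
      = ∑ t ∈ Icc 1 n, (f (w t) - F (w t) (ξ (t + τ)) + F wstar (ξ (t + τ)) - f wstar)
        + ∑ t ∈ Icc 1 n, (F (w t) (ξ (t + τ)) - F wstar (ξ (t + τ))) := by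
        rw [← sum_add_distrib]
        exact sum_congr rfl fun t _ => by ring
    _ ≤ _ := by linarith

/-- Proposition 2 (the master inequality): deterministic decomposition of the
excess stationary risk of the iterates in terms of regret, stability, and a
remainder term. -/
theorem stmt_4 {E Ξ : Type*} [NormedAddCommGroup E]
    (W : Set E) (F : E → Ξ → ℝ) (f : E → ℝ)
    (G R : ℝ) (hG : 0 ≤ G) (hR : 0 ≤ R)
    (w : ℕ → E) (hw : ∀ t, w t ∈ W)
    (ξ : ℕ → Ξ) (wstar : E) (hwstar : wstar ∈ W)
    (n : ℕ) (Rn : ℝ) (κ : ℕ → ℝ)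
    -- regret bound:
    (hregret : ∑ t ∈ Finset.Icc 1 n, (F (w t) (ξ t) - F wstar (ξ t)) ≤ Rn)
    -- stability with non-increasing κ:
    (hstab : ∀ t, ‖w t - w (t + 1)‖ ≤ κ t)
    (hκ : ∀ s t : ℕ, s ≤ t → κ t ≤ κ s)
    -- Lipschitz continuity and boundedness of the loss:
    (hlip : ∀ u v : E, u ∈ W → v ∈ W → ∀ x : Ξ, |F u x - F v x| ≤ G * ‖u - v‖)
    (hbound : ∀ u : E, u ∈ W → ∀ x : Ξ, F u x ∈ Set.Icc 0 (G * R))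
    (τ : ℕ) :
    ∑ t ∈ Finset.Icc 1 n, (f (w t) - f wstar)
      ≤ Rn + G * τ * ∑ t ∈ Finset.Icc 1 n, κ t + 2 * τ * G * R
        + ∑ t ∈ Finset.Icc 1 n,
            (f (w t) - F (w t) (ξ (t + τ)) + F wstar (ξ (t + τ)) - f wstar) :=
  stmt_4_general W F f G R hG w hw ξ wstar hwstar n Rn κ hregret hstab hκ hlip hbound τ
end

section
/- Let X_1,...,X_n be a martingale difference sequence adapted to a filtration (F_t) with |X_t| ≤ b a.s., and let V = Σ_{t=1}^n E[X_t² | F_{t-1}]. Then for any δ < 1/e and n ≥ 3, P( Σ_{t=1}^n X_t ≥ max{2√V, 3b√(log(1/δ))} · √(log(1/δ)) ) ≤ 4 δ log n. -/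
/-!
For a fixed variance level the bound is Freedman's: Bernstein's estimate
`exp y ≤ 1 + y + y² / (2 (1 - c / 3))` for `|y| ≤ c < 3` gives
`E[exp (l X_t) | ℱ_{t-1}] ≤ exp (g E[X_t² | ℱ_{t-1}])` with `g = l² / (2 (1 - l b / 3))`, so
`exp (l S_k - g V_k)` is a supermartingale, and Chernoff's bound with `l = a / (v + a b / 3)` yields
`P(S_n ≥ a, V_n ≤ v) ≤ exp (-a² / (2 v + 2 a b / 3))`.
To let the threshold adapt to the random `V_n`, peel over the geometric grid
`v_j = (7/2) b² L (3/2)^j` with `L = log (1/δ)`: on `v_j < V_n ≤ v_{j+1}` the event forces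
`S_n ≥ 2 √(v_j L)`, which has probability at most `δ`, and because `V_n ≤ n b²`
at most `4 log n` slabs are needed.
-/

open MeasureTheory ProbabilityTheory Finset

theorem Real.exp_le_one_add_add_sq_div {y c : ℝ} (hy : |y| ≤ c) (hc : c < 3) :
    Real.exp y ≤ 1 + y + y ^ 2 / (2 * (1 - c / 3)) := by
  have hc0 : 0 ≤ c := (abs_nonneg y).trans hy
  have htail : HasSum (fun m : ℕ => y ^ (m + 2) / (m + 2).factorial) (Real.exp y - (1 + y)) := by
    have := (hasSum_nat_add_iff' 2).2 (Real.exp_eq_exp_ℝ ▸ NormedSpace.expSeries_div_hasSum_exp y)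
    simpa [Finset.sum_range_succ] using this
  have hgeom : HasSum (fun m : ℕ => y ^ 2 / 2 * (c / 3) ^ m) (y ^ 2 / 2 * (1 - c / 3)⁻¹) :=
    (hasSum_geometric_of_lt_one (by positivity) (by linarith)).mul_left _
  have hterm (m : ℕ) : y ^ (m + 2) / (m + 2).factorial ≤ y ^ 2 / 2 * (c / 3) ^ m := by
    have hfac : (2 * 3 ^ m : ℝ) ≤ (m + 2).factorial := by
      exact_mod_cast (Nat.factorial_mul_pow_le_factorial (m := 2) (n := m)).trans_eq
        (by rw [add_comm])
    calc y ^ (m + 2) / (m + 2).factorial ≤ y ^ 2 * c ^ m / (2 * 3 ^ m) := by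
          gcongr ?_ / ?_
          calc y ^ (m + 2) ≤ |y| ^ (m + 2) := (le_abs_self _).trans (abs_pow y _).le
            _ = y ^ 2 * |y| ^ m := by rw [pow_add, sq_abs, mul_comm]
            _ ≤ y ^ 2 * c ^ m := by gcongr
      _ = y ^ 2 / 2 * (c / 3) ^ m := by rw [div_pow]; ring
  have := hasSum_le hterm htail hgeom
  rw [← div_eq_mul_inv, div_div] at this
  linarith

section CondExp

variable {Ω : Type*} {m m0 : MeasurableSpace Ω} {μ : Measure Ω} [IsFiniteMeasure μ]

theorem integrable_exp_of_ae_le {f : Ω → ℝ} {C : ℝ} (hf : AEStronglyMeasurable f μ)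
    (hfC : ∀ᵐ ω ∂μ, f ω ≤ C) : Integrable (fun ω => Real.exp (f ω)) μ := by
  refine .of_bound (Real.continuous_exp.comp_aestronglyMeasurable hf) (Real.exp C) ?_
  filter_upwards [hfC] with ω hω
  rw [Real.norm_eq_abs, Real.abs_exp]
  exact Real.exp_le_exp.2 hω

theorem condExp_exp_mul_le {Y : Ω → ℝ} {b l : ℝ} (hm : m ≤ m0) (hY : AEStronglyMeasurable Y μ)
    (hYb : ∀ᵐ ω ∂μ, |Y ω| ≤ b) (hYmean : μ[Y|m] =ᵐ[μ] 0) (hl : 0 ≤ l) (hlb : l * b < 3) :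
    μ[fun ω => Real.exp (l * Y ω)|m] ≤ᵐ[μ]
      fun ω => Real.exp (l ^ 2 / (2 * (1 - l * b / 3)) * μ[fun ω => Y ω ^ 2|m] ω) := by
  set g := l ^ 2 / (2 * (1 - l * b / 3))
  have hYint : Integrable Y μ := .of_bound hY b (by simpa only [Real.norm_eq_abs] using hYb)
  have hY2int : Integrable (fun ω => Y ω ^ 2) μ := by
    refine .of_bound (hY.pow 2) (b ^ 2) ?_
    filter_upwards [hYb] with ω hω
    rw [Real.norm_eq_abs, abs_pow]
    exact pow_le_pow_left₀ (abs_nonneg _) hω 2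
  have hexp_le : (fun ω => Real.exp (l * Y ω)) ≤ᵐ[μ]
      (fun _ => (1 : ℝ)) + l • Y + g • fun ω => Y ω ^ 2 := by
    filter_upwards [hYb] with ω hω
    have hlY : |l * Y ω| ≤ l * b := by
      rw [abs_mul, abs_of_nonneg hl]; exact mul_le_mul_of_nonneg_left hω hl
    have := Real.exp_le_one_add_add_sq_div hlY hlb
    simp only [Pi.add_apply, Pi.smul_apply, smul_eq_mul]
    convert this using 2; ring
  have hcondExp : μ[(fun _ => (1 : ℝ)) + l • Y + g • fun ω => Y ω ^ 2|m] =ᵐ[μ]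
      fun ω => 1 + g * μ[fun ω => Y ω ^ 2|m] ω := by
    filter_upwards [condExp_add ((integrable_const 1).add (hYint.smul l)) (hY2int.smul g) m,
      condExp_add (integrable_const 1) (hYint.smul l) m, condExp_smul l Y m,
      condExp_smul g (fun ω => Y ω ^ 2) m, hYmean] with ω h₁ h₂ h₃ h₄ h₅
    simp only [h₁, h₂, h₃, h₄, h₅, Pi.add_apply, Pi.smul_apply, smul_eq_mul, condExp_const hm,
      Pi.zero_apply]
    ring
  have hexp_int : Integrable (fun ω => Real.exp (l * Y ω)) μ := by
    refine integrable_exp_of_ae_le (C := l * b) (hY.const_mul l) ?_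
    filter_upwards [hYb] with ω hω
    exact mul_le_mul_of_nonneg_left (le_of_abs_le hω) hl
  filter_upwards [condExp_mono hexp_int
    (((integrable_const 1).add (hYint.smul l)).add (hY2int.smul g)) hexp_le, hcondExp]
    with ω h₁ h₂
  exact (h₂ ▸ h₁).trans (by linarith [Real.add_one_le_exp (g * μ[fun ω => Y ω ^ 2|m] ω)])

theorem integral_mul_le_of_condExp_le (hm : m ≤ m0) {Y Z W : Ω → ℝ} {C : ℝ}
    (hY : StronglyMeasurable[m] Y) (hY0 : ∀ᵐ ω ∂μ, 0 ≤ Y ω) (hYC : ∀ᵐ ω ∂μ, Y ω ≤ C)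
    (hZ : Integrable Z μ) (hYW : Integrable (fun ω => Y ω * W ω) μ) (hZW : μ[Z|m] ≤ᵐ[μ] W) :
    ∫ ω, Y ω * Z ω ∂μ ≤ ∫ ω, Y ω * W ω ∂μ := by
  have hYC' : ∀ᵐ ω ∂μ, ‖Y ω‖ ≤ C := by
    filter_upwards [hY0, hYC] with ω h₀ h₁
    rwa [Real.norm_of_nonneg h₀]
  calc ∫ ω, Y ω * Z ω ∂μ = ∫ ω, μ[Y * Z|m] ω ∂μ := (integral_condExp hm).symm
    _ = ∫ ω, Y ω * μ[Z|m] ω ∂μ :=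
      integral_congr_ae (condExp_stronglyMeasurable_mul_of_bound hm hY hZ C hYC')
    _ ≤ ∫ ω, Y ω * W ω ∂μ := by
      refine integral_mono_ae (integrable_condExp.bdd_mul (hY.mono hm).aestronglyMeasurable hYC')
        hYW ?_
      filter_upwards [hY0, hZW] with ω h₀ h
      exact mul_le_mul_of_nonneg_left h h₀

end CondExp

theorem le_zero_or_exists_lt_le_succ {v : ℕ → ℝ} {x : ℝ} {m : ℕ} (hx : x ≤ v m) :
    x ≤ v 0 ∨ ∃ k < m, v k < x ∧ x ≤ v (k + 1) := by
  induction m with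
  | zero => exact .inl hx
  | succ m ih =>
    by_cases hxm : x ≤ v m
    · exact (ih hxm).imp_right fun ⟨k, hk, h⟩ => ⟨k, by omega, h⟩
    · exact .inr ⟨m, by omega, not_le.1 hxm, hx⟩

theorem exists_peeling_slab {v : ℕ → ℝ} {b L s x : ℝ} {m : ℕ} (hL : 0 ≤ L) (hxm : x ≤ v m)
    (h : max (2 * √x) (3 * b * √L) * √L ≤ s) :
    (3 * b * L ≤ s ∧ x ≤ v 0) ∨ ∃ k < m, 2 * √(v k * L) ≤ s ∧ x ≤ v (k + 1) := by
  refine (le_zero_or_exists_lt_le_succ hxm).imp (fun hx => ⟨?_, hx⟩)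
    fun ⟨k, hk, hvx, hx⟩ => ⟨k, hk, ?_, hx⟩
  · calc 3 * b * L = 3 * b * (√L * √L) := by rw [Real.mul_self_sqrt hL]
      _ = 3 * b * √L * √L := by ring
      _ ≤ s := (mul_le_mul_of_nonneg_right (le_max_right _ _) (Real.sqrt_nonneg L)).trans h
  · calc 2 * √(v k * L) ≤ 2 * √x * √L := by
          rw [mul_assoc, ← Real.sqrt_mul' _ hL]
          gcongr
      _ ≤ s := (mul_le_mul_of_nonneg_right (le_max_left _ _) (Real.sqrt_nonneg L)).trans h

theorem bernstein_exponent_base {b L : ℝ} (hb : 0 < b) (hL : 0 < L) :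
    (3 * b * L) ^ 2 / (2 * (7 / 2 * b ^ 2 * L) + 2 * (3 * b * L) * b / 3) = L := by
  field_simp; ring

theorem le_bernstein_exponent_step {b L w : ℝ} (hb : 0 ≤ b) (hL : 0 ≤ L) (hw : 0 < w)
    (hbw : 16 * b ^ 2 * L ≤ 9 * w) :
    L ≤ (2 * √(w * L)) ^ 2 / (2 * (3 / 2 * w) + 2 * (2 * √(w * L)) * b / 3) := by
  have hsqrt : b * √(w * L) ≤ 3 / 4 * w := by
    rw [← Real.sqrt_sq hb, ← Real.sqrt_mul (sq_nonneg b),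
      ← Real.sqrt_sq (by positivity : 0 ≤ 3 / 4 * w)]
    exact Real.sqrt_le_sqrt (by nlinarith)
  rw [le_div_iff₀ (by positivity), mul_pow, Real.sq_sqrt (by positivity)]
  nlinarith

theorem exists_add_one_le_four_log {n : ℕ} (hn : 3 ≤ n) :
    ∃ m : ℕ, (m : ℝ) + 1 ≤ 4 * Real.log n ∧ (n : ℝ) ≤ 7 / 2 * (3 / 2) ^ m := by
  have he : Real.exp 1 < 3 := Real.exp_one_lt_d9.trans (by norm_num)
  have hlog_n : 1 ≤ Real.log n := by
    rw [Real.le_log_iff_exp_le (by positivity)]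
    exact he.le.trans (by exact_mod_cast hn)
  have hlog_72 : 1 ≤ Real.log (7 / 2) := by
    rw [Real.le_log_iff_exp_le (by positivity)]
    linarith
  have hlog_32 : 1 / 3 ≤ Real.log (3 / 2) := by
    have := Real.one_sub_inv_le_log_of_pos (by norm_num : (0 : ℝ) < 3 / 2)
    norm_num at this ⊢; linarith
  have hfloor : 1 ≤ ⌊4 * Real.log n⌋₊ := Nat.le_floor (by push_cast; linarith)
  refine ⟨⌊4 * Real.log n⌋₊ - 1, ?_, ?_⟩
  · rw [Nat.cast_sub hfloor, Nat.cast_one, sub_add_cancel]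
    exact Nat.floor_le (by positivity)
  · have := Nat.lt_floor_add_one (4 * Real.log n)
    rw [← Real.log_le_log_iff (by positivity) (by positivity),
      Real.log_mul (by norm_num) (by positivity), Real.log_pow, Nat.cast_sub hfloor]
    push_cast
    nlinarith

section Freedman

variable {Ω : Type*} {m0 : MeasurableSpace Ω} {μ : Measure Ω} {ℱ : Filtration ℕ m0}
  {X : ℕ → Ω → ℝ} {b : ℝ}

noncomputable def predictableQuadVar (μ : Measure Ω) (ℱ : Filtration ℕ m0) (X : ℕ → Ω → ℝ)
    (k : ℕ) (ω : Ω) : ℝ :=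
  ∑ t ∈ Icc 1 k, μ[fun ω' => (X t ω') ^ 2|ℱ (t - 1)] ω

theorem predictableQuadVar_succ (k : ℕ) (ω : Ω) :
    predictableQuadVar μ ℱ X (k + 1) ω =
      predictableQuadVar μ ℱ X k ω + μ[fun ω' => (X (k + 1) ω') ^ 2|ℱ k] ω := by
  rw [predictableQuadVar, predictableQuadVar, sum_Icc_succ_top (Nat.le_add_left 1 k),
    Nat.add_sub_cancel]

theorem stronglyMeasurable_predictableQuadVar {i k : ℕ} (hk : k ≤ i + 1) :
    StronglyMeasurable[ℱ i] (predictableQuadVar μ ℱ X k) :=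
  Finset.stronglyMeasurable_fun_sum _ fun t ht =>
    stronglyMeasurable_condExp.mono (ℱ.mono (by have := (mem_Icc.1 ht).2; omega))

theorem ae_predictableQuadVar_nonneg : ∀ᵐ ω ∂μ, ∀ k, 0 ≤ predictableQuadVar μ ℱ X k ω := by
  have : ∀ᵐ ω ∂μ, ∀ t, 0 ≤ μ[fun ω' => (X t ω') ^ 2|ℱ (t - 1)] ω :=
    ae_all_iff.2 fun t => condExp_nonneg (.of_forall fun ω => sq_nonneg _)
  filter_upwards [this] with ω hω k
  exact sum_nonneg fun t _ => hω t

theorem ae_predictableQuadVar_le (hbdd : ∀ t, ∀ᵐ ω ∂μ, |X t ω| ≤ b) (k : ℕ) :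
    ∀ᵐ ω ∂μ, predictableQuadVar μ ℱ X k ω ≤ k * b ^ 2 := by
  have : ∀ᵐ ω ∂μ, ∀ t, |μ[fun ω' => (X t ω') ^ 2|ℱ (t - 1)] ω| ≤ b ^ 2 := by
    refine ae_all_iff.2 fun t => ae_bdd_abs_condExp_of_ae_bdd_abs ?_
    filter_upwards [hbdd t] with ω hω
    rw [abs_pow]
    exact pow_le_pow_left₀ (abs_nonneg _) hω 2
  filter_upwards [this] with ω hω
  calc predictableQuadVar μ ℱ X k ω ≤ ∑ _t ∈ Icc 1 k, b ^ 2 :=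
        sum_le_sum fun t _ => le_of_abs_le (hω t)
    _ = k * b ^ 2 := by simp

theorem ae_sum_le (hbdd : ∀ t, ∀ᵐ ω ∂μ, |X t ω| ≤ b) :
    ∀ᵐ ω ∂μ, ∀ k, ∑ t ∈ Icc 1 k, X t ω ≤ k * b := by
  filter_upwards [ae_all_iff.2 hbdd] with ω hω k
  calc ∑ t ∈ Icc 1 k, X t ω ≤ ∑ _t ∈ Icc 1 k, b := sum_le_sum fun t _ => le_of_abs_le (hω t)
    _ = k * b := by simp

theorem stronglyMeasurable_mul_sum_sub_mul_predictableQuadVar (hadapted : StronglyAdapted ℱ X)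
    (l c : ℝ) {k j : ℕ} (hj : j ≤ k + 1) :
    StronglyMeasurable[ℱ k]
      (fun ω => l * ∑ t ∈ Icc 1 k, X t ω - c * predictableQuadVar μ ℱ X j ω) :=
  ((Finset.stronglyMeasurable_fun_sum _ fun t ht =>
    (hadapted t).mono (ℱ.mono (mem_Icc.1 ht).2)).const_mul l).sub
      ((stronglyMeasurable_predictableQuadVar hj).const_mul c)

theorem ae_mul_sum_sub_mul_predictableQuadVar_le (hbdd : ∀ t, ∀ᵐ ω ∂μ, |X t ω| ≤ b) {l c : ℝ}
    (hl : 0 ≤ l) (hc : 0 ≤ c) (k j : ℕ) :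
    ∀ᵐ ω ∂μ, l * ∑ t ∈ Icc 1 k, X t ω - c * predictableQuadVar μ ℱ X j ω ≤ l * (k * b) := by
  filter_upwards [ae_sum_le hbdd, ae_predictableQuadVar_nonneg] with ω hS hQ
  nlinarith [mul_le_mul_of_nonneg_left (hS k) hl, mul_nonneg hc (hQ j)]

theorem integrable_exp_mul_sum_sub_mul_predictableQuadVar [IsFiniteMeasure μ]
    (hadapted : StronglyAdapted ℱ X) (hbdd : ∀ t, ∀ᵐ ω ∂μ, |X t ω| ≤ b) {l c : ℝ}
    (hl : 0 ≤ l) (hc : 0 ≤ c) (k : ℕ) :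
    Integrable
      (fun ω => Real.exp (l * ∑ t ∈ Icc 1 k, X t ω - c * predictableQuadVar μ ℱ X k ω)) μ :=
  integrable_exp_of_ae_le
    ((stronglyMeasurable_mul_sum_sub_mul_predictableQuadVar hadapted l c
      k.le_succ).mono (ℱ.le k)).aestronglyMeasurable
    (ae_mul_sum_sub_mul_predictableQuadVar_le hbdd hl hc k k)

theorem integral_exp_mul_sum_sub_predictableQuadVar_le_one [IsProbabilityMeasure μ]
    (hadapted : StronglyAdapted ℱ X)
    (hmds : ∀ t, 1 ≤ t → μ[X t|ℱ (t - 1)] =ᵐ[μ] fun _ => (0 : ℝ))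
    (hbdd : ∀ t, ∀ᵐ ω ∂μ, |X t ω| ≤ b) {l : ℝ} (hl : 0 ≤ l) (hlb : l * b < 3) (k : ℕ) :
    ∫ ω, Real.exp (l * ∑ t ∈ Icc 1 k, X t ω
      - l ^ 2 / (2 * (1 - l * b / 3)) * predictableQuadVar μ ℱ X k ω) ∂μ ≤ 1 := by
  set g := l ^ 2 / (2 * (1 - l * b / 3))
  have hg : 0 ≤ g := div_nonneg (sq_nonneg l) (by linarith)
  induction k with
  | zero => simp [predictableQuadVar]
  | succ k ih =>
    set Y := fun ω =>
      Real.exp (l * ∑ t ∈ Icc 1 k, X t ω - g * predictableQuadVar μ ℱ X (k + 1) ω)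
    have hY : StronglyMeasurable[ℱ k] Y :=
      (stronglyMeasurable_mul_sum_sub_mul_predictableQuadVar hadapted l g
        le_rfl).measurable.exp.stronglyMeasurable
    have hYC : ∀ᵐ ω ∂μ, Y ω ≤ Real.exp (l * (k * b)) :=
      (ae_mul_sum_sub_mul_predictableQuadVar_le hbdd hl hg k (k + 1)).mono
        fun ω h => Real.exp_le_exp.2 h
    have hZ : Integrable (fun ω => Real.exp (l * X (k + 1) ω)) μ := by
      refine integrable_exp_of_ae_le (C := l * b)
        (((hadapted _).mono (ℱ.le _)).aestronglyMeasurable.const_mul l) ?_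
      filter_upwards [hbdd (k + 1)] with ω hω
      exact mul_le_mul_of_nonneg_left (le_of_abs_le hω) hl
    have hZW := condExp_exp_mul_le (ℱ.le k) ((hadapted _).mono (ℱ.le _)).aestronglyMeasurable
      (hbdd (k + 1)) (hmds (k + 1) (Nat.le_add_left 1 k)) hl hlb
    have hYW : (fun ω => Y ω * Real.exp (g * μ[fun ω' => (X (k + 1) ω') ^ 2|ℱ k] ω)) =
        fun ω => Real.exp (l * ∑ t ∈ Icc 1 k, X t ω - g * predictableQuadVar μ ℱ X k ω) := by
      ext ω
      rw [← Real.exp_add, predictableQuadVar_succ]; ring_nf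
    calc _ = ∫ ω, Y ω * Real.exp (l * X (k + 1) ω) ∂μ := by
          congr 1; ext ω
          rw [← Real.exp_add, sum_Icc_succ_top (Nat.le_add_left 1 k)]; ring_nf
      _ ≤ ∫ ω, Y ω * Real.exp (g * μ[fun ω' => (X (k + 1) ω') ^ 2|ℱ k] ω) ∂μ :=
          integral_mul_le_of_condExp_le (ℱ.le k) hY (.of_forall fun ω => (Real.exp_pos _).le)
            hYC hZ (hYW ▸ integrable_exp_mul_sum_sub_mul_predictableQuadVar hadapted hbdd hl hg k)
            hZW
      _ ≤ 1 := hYW ▸ ih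

theorem freedman_inequality [IsProbabilityMeasure μ] (hadapted : StronglyAdapted ℱ X)
    (hmds : ∀ t, 1 ≤ t → μ[X t|ℱ (t - 1)] =ᵐ[μ] fun _ => (0 : ℝ))
    (hbdd : ∀ t, ∀ᵐ ω ∂μ, |X t ω| ≤ b) (hb : 0 ≤ b) (n : ℕ) {a v : ℝ} (ha : 0 ≤ a)
    (hv : 0 < v) :
    μ.real {ω | a ≤ ∑ t ∈ Icc 1 n, X t ω ∧ predictableQuadVar μ ℱ X n ω ≤ v} ≤
      Real.exp (-(a ^ 2 / (2 * v + 2 * a * b / 3))) := by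
  set D := v + a * b / 3 with hD_def
  have hD : 0 < D := by positivity
  set l := a / D with hl_def
  have hl : 0 ≤ l := by positivity
  have hlb : l * b < 3 := by
    rw [hl_def, div_mul_eq_mul_div, div_lt_iff₀ hD]; linarith
  set g := l ^ 2 / (2 * (1 - l * b / 3)) with hg_def
  have hg : g = a ^ 2 / (2 * v * D) := by
    have : 1 - l * b / 3 = v / D := by rw [hl_def]; field_simp; linarith
    rw [hg_def, this, hl_def]; field_simp
  have hexponent : l * a - g * v = a ^ 2 / (2 * v + 2 * a * b / 3) := by
    rw [hg, hl_def, show 2 * v + 2 * a * b / 3 = 2 * D by linarith]; field_simp; ring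
  have hg0 : 0 ≤ g := hg ▸ by positivity
  set F := fun ω => l * ∑ t ∈ Icc 1 n, X t ω - g * predictableQuadVar μ ℱ X n ω
  have hsub : {ω | a ≤ ∑ t ∈ Icc 1 n, X t ω ∧ predictableQuadVar μ ℱ X n ω ≤ v} ⊆
      {ω | l * a - g * v ≤ F ω} := fun ω ⟨hS, hQ⟩ => by
    have := mul_le_mul_of_nonneg_left hS hl
    have := mul_le_mul_of_nonneg_left hQ hg0
    simp only [Set.mem_ofPred_eq, F]; linarith
  have hmgf : mgf F μ 1 ≤ 1 := by
    simpa [mgf, F] using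
      integral_exp_mul_sum_sub_predictableQuadVar_le_one hadapted hmds hbdd hl hlb n
  calc _ ≤ μ.real {ω | l * a - g * v ≤ F ω} := measureReal_mono hsub
    _ ≤ Real.exp (-1 * (l * a - g * v)) * mgf F μ 1 :=
      measure_ge_le_exp_mul_mgf _ zero_le_one (by simpa only [one_mul] using
        integrable_exp_mul_sum_sub_mul_predictableQuadVar hadapted hbdd hl hg0 n)
    _ ≤ Real.exp (-(a ^ 2 / (2 * v + 2 * a * b / 3))) := by
      rw [neg_one_mul, hexponent]
      exact mul_le_of_le_one_right (Real.exp_pos _).le hmgf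

theorem measureReal_le_of_peeling [IsProbabilityMeasure μ] (hadapted : StronglyAdapted ℱ X)
    (hmds : ∀ t, 1 ≤ t → μ[X t|ℱ (t - 1)] =ᵐ[μ] fun _ => (0 : ℝ))
    (hbdd : ∀ t, ∀ᵐ ω ∂μ, |X t ω| ≤ b) (hb : 0 < b) {L : ℝ} (hL : 0 < L) {n m : ℕ}
    (hm : n * b ^ 2 ≤ 7 / 2 * b ^ 2 * L * (3 / 2) ^ m) :
    μ.real {ω | max (2 * √(predictableQuadVar μ ℱ X n ω)) (3 * b * √L) * √L ≤
      ∑ t ∈ Icc 1 n, X t ω} ≤ (m + 1) * Real.exp (-L) := by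
  -- `v 0` is chosen so that the Bernstein exponent of the first slab is exactly `L`
  set v : ℕ → ℝ := fun j => 7 / 2 * b ^ 2 * L * (3 / 2) ^ j with hv
  let slab (a : ℝ) (j : ℕ) : Set Ω :=
    {ω | a ≤ ∑ t ∈ Icc 1 n, X t ω ∧ predictableQuadVar μ ℱ X n ω ≤ v j}
  have hsub : ({ω | max (2 * √(predictableQuadVar μ ℱ X n ω)) (3 * b * √L) * √L ≤
      ∑ t ∈ Icc 1 n, X t ω} : Set Ω) ≤ᵐ[μ]
        (slab (3 * b * L) 0 ∪ ⋃ k ∈ range m, slab (2 * √(v k * L)) (k + 1) : Set Ω) := by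
    filter_upwards [ae_predictableQuadVar_le hbdd n] with ω hQ hω
    rcases exists_peeling_slab hL.le (hQ.trans (show _ ≤ v m from hm)) hω with h | ⟨k, hk, h⟩
    · exact .inl h
    · exact .inr (Set.mem_biUnion (mem_range.2 hk) h)
  have hslab_zero : μ.real (slab (3 * b * L) 0) ≤ Real.exp (-L) := by
    refine (freedman_inequality hadapted hmds hbdd hb.le n (by positivity) (by positivity)).trans ?_
    simp only [hv, pow_zero, mul_one, bernstein_exponent_base hb hL, le_refl]
  have hslab_succ (k : ℕ) : μ.real (slab (2 * √(v k * L)) (k + 1)) ≤ Real.exp (-L) := by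
    refine (freedman_inequality hadapted hmds hbdd hb.le n (by positivity) (by positivity)).trans ?_
    have hv_succ : v (k + 1) = 3 / 2 * v k := by simp only [hv, pow_succ]; ring
    rw [Real.exp_le_exp, neg_le_neg_iff, hv_succ]
    refine le_bernstein_exponent_step hb.le hL.le (by positivity) ?_
    simp only [hv]
    nlinarith [one_le_pow₀ (by norm_num : (1 : ℝ) ≤ 3 / 2) (n := k), mul_pos (pow_pos hb 2) hL]
  calc _ ≤ μ.real (slab (3 * b * L) 0 ∪ ⋃ k ∈ range m, slab (2 * √(v k * L)) (k + 1)) :=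
        ENNReal.toReal_mono (measure_ne_top _ _) (measure_mono_ae hsub)
    _ ≤ Real.exp (-L) + ∑ _k ∈ range m, Real.exp (-L) :=
        (measureReal_union_le _ _).trans (add_le_add hslab_zero
          ((measureReal_biUnion_finset_le _ _).trans (sum_le_sum fun k _ => hslab_succ k)))
    _ = (m + 1) * Real.exp (-L) := by rw [sum_const, card_range, nsmul_eq_mul]; ring

end Freedman

theorem stmt_16_general {Ω : Type*} {m0 : MeasurableSpace Ω} (μ : Measure Ω)
    [IsProbabilityMeasure μ]
    (ℱ : MeasureTheory.Filtration ℕ m0)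
    (X : ℕ → Ω → ℝ) (n : ℕ) (hn : 3 ≤ n)
    (b δ : ℝ) (hb : 0 < b) (hδ : 0 < δ) (hδe : δ < Real.exp (-1))
    (hadapted : ∀ t, StronglyMeasurable[ℱ t] (X t))
    -- martingale difference sequence:
    (hmds : ∀ t, 1 ≤ t → μ[X t|ℱ (t - 1)] =ᵐ[μ] fun _ => (0 : ℝ))
    (hbdd : ∀ t, ∀ᵐ ω ∂μ, |X t ω| ≤ b)
    (V : Ω → ℝ)
    (hV : V =ᵐ[μ] fun ω =>
      ∑ t ∈ Finset.Icc 1 n, (μ[fun ω' => (X t ω') ^ 2|ℱ (t - 1)]) ω) :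
    (μ {ω | max (2 * Real.sqrt (V ω)) (3 * b * Real.sqrt (Real.log (1 / δ)))
          * Real.sqrt (Real.log (1 / δ))
        ≤ ∑ t ∈ Finset.Icc 1 n, X t ω}).toReal
      ≤ 4 * δ * Real.log n := by
  set L := Real.log (1 / δ) with hL_def
  have hL : 1 < L := by
    rw [hL_def, one_div, Real.log_inv, lt_neg, ← Real.log_exp (-1)]
    exact Real.log_lt_log hδ hδe
  have hδL : Real.exp (-L) = δ := by rw [hL_def, one_div, Real.log_inv, neg_neg, Real.exp_log hδ]
  obtain ⟨m, hm_count, hm_cover⟩ := exists_add_one_le_four_log hn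
  have hm : n * b ^ 2 ≤ 7 / 2 * b ^ 2 * L * (3 / 2) ^ m := by
    calc (n : ℝ) * b ^ 2 ≤ 7 / 2 * (3 / 2) ^ m * b ^ 2 := by gcongr
      _ = 7 / 2 * b ^ 2 * 1 * (3 / 2) ^ m := by ring
      _ ≤ 7 / 2 * b ^ 2 * L * (3 / 2) ^ m := by gcongr
  have hE : {ω | max (2 * √(V ω)) (3 * b * √L) * √L ≤ ∑ t ∈ Icc 1 n, X t ω} =ᵐ[μ]
      {ω | max (2 * √(predictableQuadVar μ ℱ X n ω)) (3 * b * √L) * √L ≤ ∑ t ∈ Icc 1 n, X t ω} := by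
    filter_upwards [hV] with ω hω
    change (_ ≤ _) = (_ ≤ _)
    rw [hω]; rfl
  calc μ.real _ = μ.real _ := by rw [measureReal_def, measureReal_def, measure_congr hE]
    _ ≤ (m + 1) * Real.exp (-L) := measureReal_le_of_peeling hadapted hmds hbdd hb (by linarith) hm
    _ ≤ 4 * δ * Real.log n := by rw [hδL]; nlinarith

/-- Freedman's inequality in the form of Kakade–Tewari (Lemma 3): for a
martingale difference sequence bounded by `b` with conditional variance proxy
`V`, the deviation `max{2√V, 3b√log(1/δ)}·√log(1/δ)` holds except with
probability `4δ log n`. -/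
theorem stmt_16 {Ω : Type*} {m0 : MeasurableSpace Ω} (μ : Measure Ω)
    [IsProbabilityMeasure μ]
    (ℱ : MeasureTheory.Filtration ℕ m0)
    (X : ℕ → Ω → ℝ) (n : ℕ) (hn : 3 ≤ n)
    (b δ : ℝ) (hb : 0 < b) (hδ : 0 < δ) (hδe : δ < Real.exp (-1))
    (hadapted : ∀ t, StronglyMeasurable[ℱ t] (X t))
    (hint : ∀ t, Integrable (X t) μ)
    -- martingale difference sequence:
    (hmds : ∀ t, 1 ≤ t → μ[X t|ℱ (t - 1)] =ᵐ[μ] fun _ => (0 : ℝ))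
    (hbdd : ∀ t, ∀ᵐ ω ∂μ, |X t ω| ≤ b)
    (V : Ω → ℝ)
    (hV : V =ᵐ[μ] fun ω =>
      ∑ t ∈ Finset.Icc 1 n, (μ[fun ω' => (X t ω') ^ 2|ℱ (t - 1)]) ω) :
    (μ {ω | max (2 * Real.sqrt (V ω)) (3 * b * Real.sqrt (Real.log (1 / δ)))
          * Real.sqrt (Real.log (1 / δ))
        ≤ ∑ t ∈ Finset.Icc 1 n, X t ω}).toReal
      ≤ 4 * δ * Real.log n :=
  stmt_16_general μ ℱ X n hn b δ hb hδ hδe hadapted hmds hbdd V hV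
end

section
/- Let x_1, ..., x_n ∈ ℝ^d with ‖x_t‖₂ ≤ B, let ε > 0 and define A_{t,ε} = ε I + Σ_{i=1}^t x_i x_i^⊤. Then Σ_{t=1}^n x_t^⊤ A_{t,ε}^{-1} x_t ≤ d log(B² n / ε + 1). -/
/-!
By the matrix determinant lemma, `det A_{t-1} = det A_t * (1 - x_tᵀ A_t⁻¹ x_t)`, so
`log r ≤ r - 1` with `r = det A_{t-1} / det A_t` gives
`x_tᵀ A_t⁻¹ x_t ≤ log det A_t - log det A_{t-1}`, and the sum telescopes to
`log det A_n - d log ε`. Since `trace A_n ≤ d (ε + B² n)`, the AM–GM inequality for the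
eigenvalues of `A_n` (again in the form `log r ≤ r - 1`) bounds `log det A_n` by
`d log (ε + B² n)`.
-/

open Finset Matrix

namespace Matrix

variable {m : Type*} [Fintype m] [DecidableEq m]

theorem det_add_vecMulVec {R : Type*} [CommRing R] {A : Matrix m m R} (hA : IsUnit A.det)
    (u v : m → R) : (A + vecMulVec u v).det = A.det * (1 + v ⬝ᵥ (A⁻¹ *ᵥ u)) := by
  rw [vecMulVec_eq Unit, det_add_replicateCol_mul_replicateRow hA, Matrix.mul_assoc,
    ← replicateCol_mulVec, det_unique (1 + _), add_apply, replicateRow_mul_replicateCol_apply,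
    one_apply_eq]

omit [DecidableEq m] in
theorem posSemidef_vecMulVec_self (u : m → ℝ) : (vecMulVec u u).PosSemidef :=
  posSemidef_vecMulVec_self_star u

theorem PosDef.dotProduct_inv_mulVec_le_log_det_sub {M : Matrix m m ℝ} (hM : M.PosDef)
    (u : m → ℝ) :
    u ⬝ᵥ ((M + vecMulVec u u)⁻¹ *ᵥ u) ≤ Real.log (M + vecMulVec u u).det - Real.log M.det := by
  set N := M + vecMulVec u u with hNdef
  have hN : N.PosDef := hM.add_posSemidef (posSemidef_vecMulVec_self u)
  have hratio : M.det / N.det = 1 - u ⬝ᵥ (N⁻¹ *ᵥ u) := by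
    have hMN : M = N + vecMulVec (-u) u := by simp [hNdef, neg_vecMulVec]
    rw [hMN, det_add_vecMulVec hN.det_pos.ne'.isUnit, mul_div_cancel_left₀ _ hN.det_pos.ne',
      mulVec_neg, dotProduct_neg, ← sub_eq_add_neg]
  have hlog := Real.log_le_sub_one_of_pos (div_pos hM.det_pos hN.det_pos)
  rw [Real.log_div hM.det_pos.ne' hN.det_pos.ne', hratio] at hlog
  linarith

theorem sum_dotProduct_inv_mulVec_le_log_det_sub {A : ℕ → Matrix m m ℝ} {x : ℕ → m → ℝ}
    (hA : ∀ t, (A t).PosDef) (hstep : ∀ t, A (t + 1) = A t + vecMulVec (x (t + 1)) (x (t + 1)))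
    (n : ℕ) :
    ∑ t ∈ Icc 1 n, x t ⬝ᵥ ((A t)⁻¹ *ᵥ x t) ≤ Real.log (A n).det - Real.log (A 0).det := by
  induction n with
  | zero => simp
  | succ n ih =>
    rw [sum_Icc_succ_top (by omega), hstep n]
    have := (hA n).dotProduct_inv_mulVec_le_log_det_sub (x (n + 1))
    linarith

theorem PosDef.log_det_le_of_trace_le {A : Matrix m m ℝ} (hA : A.PosDef) {c : ℝ} (hc : 0 < c)
    (htr : A.trace ≤ Fintype.card m * c) : Real.log A.det ≤ Fintype.card m * Real.log c := by
  set ev := hA.isHermitian.eigenvalues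
  have hdet : A.det = ∏ i, ev i := by simpa using hA.isHermitian.det_eq_prod_eigenvalues
  have htrace : A.trace = ∑ i, ev i := by simpa using hA.isHermitian.trace_eq_sum_eigenvalues
  have hlog : ∀ i, Real.log (ev i) ≤ Real.log c + (ev i / c - 1) := fun i => by
    have := Real.log_le_sub_one_of_pos (div_pos (hA.eigenvalues_pos i) hc)
    rw [Real.log_div (hA.eigenvalues_pos i).ne' hc.ne'] at this
    linarith
  have hmean : ∑ i, (ev i / c - 1) ≤ 0 := by
    rw [sum_sub_distrib, ← sum_div, ← htrace, sum_const, card_univ, nsmul_one, sub_nonpos,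
      div_le_iff₀ hc]
    exact htr
  calc Real.log A.det = ∑ i, Real.log (ev i) := by
        rw [hdet, Real.log_prod fun i _ => (hA.eigenvalues_pos i).ne']
    _ ≤ ∑ i, (Real.log c + (ev i / c - 1)) := sum_le_sum fun i _ => hlog i
    _ ≤ Fintype.card m * Real.log c := by
        rw [sum_add_distrib, sum_const, card_univ, nsmul_eq_mul]
        linarith

end Matrix

theorem stmt_18_general {d : ℕ} (x : ℕ → Fin d → ℝ) (n : ℕ)
    (B ε : ℝ) (hε : 0 < ε)
    (hx : ∀ t, Real.sqrt (∑ j, x t j ^ 2) ≤ B)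
    (A : ℕ → Matrix (Fin d) (Fin d) ℝ)
    (hA : ∀ t, A t = ε • (1 : Matrix (Fin d) (Fin d) ℝ)
      + ∑ i ∈ Finset.Icc 1 t, vecMulVec (x i) (x i)) :
    ∑ t ∈ Finset.Icc 1 n, x t ⬝ᵥ ((A t)⁻¹ *ᵥ x t)
      ≤ (d : ℝ) * Real.log (B ^ 2 * n / ε + 1) := by
  rcases d.eq_zero_or_pos with rfl | hd
  · simp
  have hpos : ∀ t, (A t).PosDef := fun t => by
    rw [hA]
    exact (PosDef.one.smul hε).add_posSemidef
      (posSemidef_sum _ fun i _ => posSemidef_vecMulVec_self (x i))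
  have hstep : ∀ t, A (t + 1) = A t + vecMulVec (x (t + 1)) (x (t + 1)) := fun t => by
    rw [hA, hA, sum_Icc_succ_top (by omega), add_assoc]
  have hsum : ∑ t ∈ Icc 1 n, x t ⬝ᵥ x t ≤ B ^ 2 * n := by
    have hnorm : ∀ t, x t ⬝ᵥ x t ≤ B ^ 2 := fun t => by
      simpa [dotProduct, sq] using (Real.sqrt_le_iff.1 (hx t)).2
    simpa [mul_comm] using sum_le_sum fun t (_ : t ∈ Icc 1 n) => hnorm t
  have htr : (A n).trace ≤ Fintype.card (Fin d) * (ε + B ^ 2 * n) := by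
    have hd' : B ^ 2 * n ≤ d * (B ^ 2 * n) :=
      le_mul_of_one_le_left (by positivity) (by exact_mod_cast hd)
    rw [hA, trace_add, trace_smul, trace_one, trace_sum]
    simp only [trace_vecMulVec, Fintype.card_fin, smul_eq_mul]
    linarith
  have hc : 0 < ε + B ^ 2 * n := by positivity
  have hdet0 : Real.log (A 0).det = d * Real.log ε := by
    rw [hA 0, Icc_eq_empty (by omega), sum_empty, add_zero, det_smul, det_one, mul_one,
      Real.log_pow, Fintype.card_fin]
  have hdetn : Real.log (A n).det ≤ d * Real.log (ε + B ^ 2 * n) := by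
    simpa using (hpos n).log_det_le_of_trace_le hc htr
  calc ∑ t ∈ Icc 1 n, x t ⬝ᵥ ((A t)⁻¹ *ᵥ x t)
      ≤ Real.log (A n).det - Real.log (A 0).det :=
        sum_dotProduct_inv_mulVec_le_log_det_sub hpos hstep n
    _ ≤ d * Real.log (ε + B ^ 2 * n) - d * Real.log ε := by rw [hdet0]; linarith
    _ = d * Real.log (B ^ 2 * n / ε + 1) := by
        rw [← mul_sub, ← Real.log_div hc.ne' hε.ne']
        congr 2
        field_simp
        ring

/-- The elliptic potential lemma (Lemma 11 of Hazan–Agarwal–Kale):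
`∑_{t=1}^n ‖x_t‖²_{A_{t,ε}⁻¹} ≤ d log(B²n/ε + 1)` where
`A_{t,ε} = εI + ∑_{i≤t} x_i x_iᵀ`. -/
theorem stmt_18 {d : ℕ} (x : ℕ → Fin d → ℝ) (n : ℕ)
    (B ε : ℝ) (hB : 0 < B) (hε : 0 < ε)
    (hx : ∀ t, Real.sqrt (∑ j, x t j ^ 2) ≤ B)
    (A : ℕ → Matrix (Fin d) (Fin d) ℝ)
    (hA : ∀ t, A t = ε • (1 : Matrix (Fin d) (Fin d) ℝ)
      + ∑ i ∈ Finset.Icc 1 t, vecMulVec (x i) (x i)) :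
    ∑ t ∈ Finset.Icc 1 n, x t ⬝ᵥ ((A t)⁻¹ *ᵥ x t)
      ≤ (d : ℝ) * Real.log (B ^ 2 * n / ε + 1) :=
  stmt_18_general x n B ε hε hx A hA
end
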